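/- There exist g ∈ (0,1/2) and r ∈ (0,1) such that ((1−2g)r)² < E(4g r²/(1+r⁴))². (That is, the accessible-entanglement monogamy relation E_a² ≥ E₁₂² + E₁₃² + E₂₃² is violated by some non-generic GHZ-class states ψ(g₁,0,0,r) with r ∈ (0,1).) -/

import Mathlib

/-- Binary Shannon entropy (base 2), with the convention `0 * log₂ 0 = 0`
(automatic since `Real.logb 2 0 = 0`). -/
noncomputable def binEntropy (p : ℝ) : ℝ :=
  -p * Real.logb 2 p - (1 - p) * Real.logb 2 (1 - p)

/-- Entanglement-of-formation function of the concurrence `C`. -/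
noncomputable def eof (C : ℝ) : ℝ :=
  binEntropy ((1 + Real.sqrt (1 - C ^ 2)) / 2)

/-!
As `g → 1/2` the accessible entanglement `(1 - 2g) r` tends to `0`, while the concurrence
`C₂₃ = 4 g r² / (1 + r⁴)` tends to `2 r² / (1 + r⁴) ≠ 0`, where the entanglement of formation is
strictly positive. By continuity, the strict inequality `E_a² < E₂₃²` therefore holds for all `g`
close enough to `1/2`, in particular for some `g < 1/2`.
-/

open Filter Topology

theorem binEntropy_eq_div_log_two (p : ℝ) : binEntropy p = Real.binEntropy p / Real.log 2 := by
  simp only [binEntropy, Real.binEntropy, ← Real.log_div_log, Real.log_inv]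
  ring

@[fun_prop]
theorem continuous_binEntropy : Continuous binEntropy := by
  rw [funext binEntropy_eq_div_log_two]
  fun_prop

theorem binEntropy_pos {p : ℝ} (hp₀ : 0 < p) (hp₁ : p < 1) : 0 < binEntropy p := by
  rw [binEntropy_eq_div_log_two]
  exact div_pos (Real.binEntropy_pos hp₀ hp₁) (Real.log_pos one_lt_two)

@[fun_prop]
theorem continuous_eof : Continuous eof := by
  unfold eof
  fun_prop

theorem eof_pos {C : ℝ} (hC : C ≠ 0) : 0 < eof C := by
  have hs : Real.sqrt (1 - C ^ 2) < 1 := by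
    rw [Real.sqrt_lt' one_pos]
    have hC2 : 0 < C ^ 2 := by positivity
    linarith
  exact binEntropy_pos (by positivity) (by linarith)

theorem eventually_accessible_monogamy_violation {r : ℝ} (hr : r ≠ 0) :
    ∀ᶠ g in 𝓝 (1 / 2 : ℝ),
      ((1 - 2 * g) * r) ^ 2 < (eof (4 * g * r ^ 2 / (1 + r ^ 4))) ^ 2 := by
  have hcont : Continuous fun g : ℝ ↦
      (eof (4 * g * r ^ 2 / (1 + r ^ 4))) ^ 2 - ((1 - 2 * g) * r) ^ 2 := by
    fun_prop (disch := positivity)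
  have hlimit : 0 < (eof (4 * (1 / 2) * r ^ 2 / (1 + r ^ 4))) ^ 2 - ((1 - 2 * (1 / 2)) * r) ^ 2 := by
    have hE : 0 < eof (4 * (1 / 2) * r ^ 2 / (1 + r ^ 4)) := eof_pos (by positivity)
    simpa using pow_pos hE 2
  filter_upwards [hcont.continuousAt.eventually (lt_mem_nhds hlimit)] with g hg
  exact sub_pos.mp hg

/-- The accessible-entanglement monogamy relation is violated by some non-generic
GHZ-class states `ψ(g,0,0,r)` with `r ∈ (0,1)`. -/
theorem exists_accessible_monogamy_violation :
    ∃ g ∈ Set.Ioo (0 : ℝ) (1 / 2), ∃ r ∈ Set.Ioo (0 : ℝ) 1,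
      ((1 - 2 * g) * r) ^ 2 < (eof (4 * g * r ^ 2 / (1 + r ^ 4))) ^ 2 := by
  obtain ⟨g, hg, hlt⟩ := (Filter.Eventually.and (Ioo_mem_nhdsLT (by norm_num : (0 : ℝ) < 1 / 2))
    (nhdsWithin_le_nhds (eventually_accessible_monogamy_violation (r := 1 / 2) (by norm_num)))).exists
  exact ⟨g, hg, 1 / 2, by norm_num, hlt⟩
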